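/- Let q ⊆ ℝⁿ be a closed set with boundary ∂q, and c a nonnegative vector. Let q̲(c) be the reduction of q by c. Suppose y ∈ q̲(c) and e, v ∈ ℝⁿ with |e⁽ⁱ⁾| ≤ εᵢ, |v⁽ⁱ⁾| ≤ ηᵢ, and εᵢ + ηᵢ ≤ cᵢ for all i. Then y + e + v ∈ q. -/
import Mathlib


/-- The reduction of a set `q ⊆ ℝⁿ` by a nonnegative vector `c`. -/
def reduceSet {n : ℕ} (q : Set (Fin n → ℝ)) (c : Fin n → ℝ) : Set (Fin n → ℝ) :=
  {x ∈ q | ∀ z ∈ frontier q, ∀ i, c i < |x i - z i|}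

/-- If `y` is in the reduction of a closed set `q` by `c`, and the perturbations
`e`, `v` are componentwise bounded by `ε`, `η` with `ε i + η i ≤ c i`, then the
perturbed point `y + e + v` stays in `q`. -/
theorem perturbed_mem_of_mem_reduceSet {n : ℕ} (q : Set (Fin n → ℝ))
    (hq : IsClosed q) (c ε η : Fin n → ℝ)
    (hc : ∀ i, 0 ≤ c i) (hεη : ∀ i, ε i + η i ≤ c i)
    (y e v : Fin n → ℝ) (hy : y ∈ reduceSet q c)
    (he : ∀ i, |e i| ≤ ε i) (hv : ∀ i, |v i| ≤ η i) :
    y + e + v ∈ q := by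
  by_contra hmem
  set w : Fin n → ℝ := e + v with hw
  have hyw : y + e + v = y + w := by simp [hw]; abel
  rw [hyw] at hmem
  -- the path
  set f : ℝ → (Fin n → ℝ) := fun t => y + t • w with hf
  have hfc : Continuous f := by continuity
  set S : Set ℝ := Set.Icc (0:ℝ) 1 ∩ f ⁻¹' q with hS
  have h0S : (0:ℝ) ∈ S := by
    constructor
    · exact Set.mem_Icc.mpr ⟨le_refl _, zero_le_one⟩
    · simp [hf, hw]; exact hy.1
  have hSclosed : IsClosed S := (isClosed_Icc).inter (hq.preimage hfc)
  have hSbdd : BddAbove S := ⟨1, fun t ht => ht.1.2⟩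
  set τ := sSup S with hτ
  have hτS : τ ∈ S := hSclosed.csSup_mem ⟨0, h0S⟩ hSbdd
  have hτ0 : 0 ≤ τ := le_csSup hSbdd h0S
  have hτ1 : τ ≤ 1 := hτS.1.2
  have hfτq : f τ ∈ q := hτS.2
  have hτne1 : τ ≠ 1 := by
    intro h
    apply hmem
    have : f 1 = y + w := by simp [hf]
    rw [← this, ← h]; exact hfτq
  have hτlt1 : τ < 1 := lt_of_le_of_ne hτ1 hτne1
  -- points beyond τ are outside q
  have hout : ∀ t ∈ Set.Ioc τ (1:ℝ), f t ∈ qᶜ := by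
    intro t ht
    intro hfq
    have : t ∈ S := ⟨⟨hτ0.trans ht.1.le, ht.2⟩, hfq⟩
    exact absurd (le_csSup hSbdd this) (not_le.mpr ht.1)
  -- f τ is in the closure of qᶜ
  have hτcl : τ ∈ closure (Set.Ioc τ (1:ℝ)) := by
    rw [closure_Ioc hτlt1.ne]
    exact ⟨le_refl _, hτ1⟩
  have hfτcl : f τ ∈ closure qᶜ :=
    map_mem_closure hfc hτcl hout
  -- hence f τ ∈ frontier q
  have hfront : f τ ∈ frontier q := by
    rw [frontier_eq_closure_inter_closure]
    exact ⟨subset_closure hfτq, hfτcl⟩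
  -- contradiction with the reduction property at any coordinate
  have := hy.2 (f τ) hfront
  rcases Nat.eq_zero_or_pos n with hn | hn
  · -- n = 0 : f τ = y, so |y i - f τ i| = 0 ≤ c i contradiction needs a coordinate;
    -- instead, y = f τ ∈ frontier q and y ∈ q, but then hy.2 gives nothing; use y = y+e+v
    subst hn
    apply hmem
    have : y + w = y := by funext i; exact absurd i.2 (Nat.not_lt_zero _)
    rw [this]; exact hy.1
  · obtain ⟨i⟩ := Fin.pos_iff_nonempty.mp hn
    have hi := this i
    have hzi : f τ i = y i + τ * w i := by simp [hf]
    have habs : |y i - f τ i| = τ * |w i| := by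
      rw [hzi]
      have : y i - (y i + τ * w i) = -(τ * w i) := by ring
      rw [this, abs_neg, abs_mul, abs_of_nonneg hτ0]
    have hwle : |w i| ≤ c i := by
      calc |w i| = |e i + v i| := by simp [hw]
        _ ≤ |e i| + |v i| := abs_add_le _ _
        _ ≤ ε i + η i := add_le_add (he i) (hv i)
        _ ≤ c i := hεη i
    have : |y i - f τ i| ≤ c i := by
      rw [habs]
      calc τ * |w i| ≤ 1 * |w i| := by
            apply mul_le_mul_of_nonneg_right hτ1 (abs_nonneg _)
        _ = |w i| := one_mul _
        _ ≤ c i := hwle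
    exact absurd hi (not_lt.mpr this)
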